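/- For the path P_n on n ≥ 1 vertices, the minimum size of a nonempty CCD subset of V(P_n) equals ⌈n/3⌉. -/

import Mathlib

open Finset

variable {V : Type*} [Fintype V] [DecidableEq V]

/-- Number of neighbours of `v` inside the set `S`. -/
def nbrsIn (G : SimpleGraph V) [DecidableRel G.Adj] (S : Finset V) (v : V) : ℕ :=
  (S.filter (fun u => G.Adj v u)).card

/-- `H` is complementary component dominant (CCD). -/
def CCD (G : SimpleGraph V) [DecidableRel G.Adj] (H : Finset V) : Prop :=
  (∀ x y, G.Adj x y → x ∈ H → y ∈ H → nbrsIn G Hᶜ x = nbrsIn G Hᶜ y) ∧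
  (∀ u v, G.Adj u v → u ∉ H → v ∉ H → nbrsIn G H u = nbrsIn G H v)

/-- The path graph on `n` vertices `0, 1, …, n-1`. -/
def pathG (n : ℕ) : SimpleGraph (Fin n) where
  Adj i j := i.val + 1 = j.val ∨ j.val + 1 = i.val
  symm := by constructor; intro i j h; tauto
  loopless := by constructor; intro i h; rcases h with h | h <;> omega

instance (n : ℕ) : DecidableRel (pathG n).Adj :=
  fun i j => inferInstanceAs (Decidable (i.val + 1 = j.val ∨ j.val + 1 = i.val))

/-!
A nonempty CCD set `H` of a connected graph is dominating: the vertices outside `H` without a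
neighbour in `H` form a set closed under adjacency, so they are all vertices or none. In the path
every vertex dominates at most three vertices, which gives the lower bound `⌈n/3⌉`. Conversely the
vertices `≡ 1 (mod 3)`, together with the last vertex when `n ≡ 1 (mod 3)`, form a CCD set of that
size: it is independent, and two adjacent vertices outside it each have exactly one neighbour in it.
-/

open SimpleGraph

section

variable {G : SimpleGraph V} [DecidableRel G.Adj]

theorem CCD.exists_adj_mem (hG : G.Preconnected) {H : Finset V} (hH : CCD G H)
    (hne : H.Nonempty) {v : V} (hv : v ∉ H) : ∃ u ∈ H, G.Adj v u := by
  have hzero : ∀ w, nbrsIn G H w = 0 ↔ ∀ u ∈ H, ¬G.Adj w u := fun w => by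
    simp [nbrsIn, filter_eq_empty_iff]
  let Z : V → Prop := fun w => w ∉ H ∧ nbrsIn G H w = 0
  have hZ_adj : ∀ {w w'}, G.Adj w w' → Z w → Z w' := by
    intro w w' hww' ⟨hw, hw0⟩
    have hw' : w' ∉ H := fun hw' => (hzero w).1 hw0 w' hw' hww'
    exact ⟨hw', hw0 ▸ hH.2 w' w hww'.symm hw' hw⟩
  have hZ_walk : ∀ {a b : V}, G.Walk a b → Z a → Z b := by
    intro a b p
    induction p with
    | nil => exact id
    | cons h _ ih => exact fun ha => ih (hZ_adj h ha)
  by_contra hnone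
  obtain ⟨x, hx⟩ := hne
  obtain ⟨p⟩ := hG v x
  exact (hZ_walk p ⟨hv, (hzero v).2 fun u hu hvu => hnone ⟨u, hu, hvu⟩⟩).1 hx

theorem card_le_mul_card_of_dominating {d : ℕ} (hdeg : ∀ v, G.degree v ≤ d) {H : Finset V}
    (hdom : ∀ v ∉ H, ∃ u ∈ H, G.Adj v u) : Fintype.card V ≤ (d + 1) * #H := by
  have hcover : (univ : Finset V) ⊆ H.biUnion fun u => insert u (G.neighborFinset u) := by
    intro v _
    simp only [mem_biUnion, mem_insert, mem_neighborFinset]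
    by_cases hv : v ∈ H
    · exact ⟨v, hv, .inl rfl⟩
    · obtain ⟨u, hu, hvu⟩ := hdom v hv
      exact ⟨u, hu, .inr hvu.symm⟩
  calc Fintype.card V = #(univ : Finset V) := card_univ.symm
    _ ≤ #(H.biUnion fun u => insert u (G.neighborFinset u)) := card_le_card hcover
    _ ≤ ∑ u ∈ H, #(insert u (G.neighborFinset u)) := card_biUnion_le
    _ ≤ ∑ _u ∈ H, (d + 1) := sum_le_sum fun u _ =>
        (card_insert_le _ _).trans (by simpa using hdeg u)
    _ = (d + 1) * #H := by rw [sum_const, smul_eq_mul, mul_comm]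

end

@[simp]
lemma pathG_adj {n : ℕ} {i j : Fin n} :
    (pathG n).Adj i j ↔ i.val + 1 = j.val ∨ j.val + 1 = i.val :=
  Iff.rfl

lemma pathG_eq_pathGraph (n : ℕ) : pathG n = pathGraph n := by
  ext
  rw [pathGraph_adj, pathG_adj]

lemma pathG_preconnected (n : ℕ) : (pathG n).Preconnected :=
  pathG_eq_pathGraph n ▸ pathGraph_preconnected n

lemma pathG_degree_le_two {n : ℕ} (v : Fin n) : (pathG n).degree v ≤ 2 := by
  rw [← card_neighborFinset_eq_degree]
  calc #((pathG n).neighborFinset v) ≤ #({v.val - 1, v.val + 1} : Finset ℕ) := by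
        refine card_le_card_of_injOn Fin.val (fun w hw => ?_) Fin.val_injective.injOn
        simp only [coe_insert, coe_singleton, Set.mem_insert_iff, Set.mem_singleton_iff,
          mem_coe, mem_neighborFinset, pathG_adj] at hw ⊢
        omega
    _ ≤ 2 := card_le_two

def pathCCDSet (n : ℕ) : Finset (Fin n) :=
  {i | i.val % 3 = 1 ∨ (i.val % 3 = 0 ∧ i.val + 1 = n)}

@[simp]
lemma mem_pathCCDSet {n : ℕ} {i : Fin n} :
    i ∈ pathCCDSet n ↔ i.val % 3 = 1 ∨ (i.val % 3 = 0 ∧ i.val + 1 = n) := by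
  simp [pathCCDSet]

lemma card_filter_range_mod_three_eq_one (m : ℕ) :
    #{i ∈ range m | i % 3 = 1} = (m + 1) / 3 := by
  induction m with
  | zero => simp
  | succ k ih =>
    rw [range_add_one, filter_insert]
    split_ifs with h
    · rw [card_insert_of_notMem (by simp), ih]
      omega
    · rw [ih]
      omega

lemma card_pathCCDSet (n : ℕ) : #(pathCCDSet n) = (n + 2) / 3 := by
  have hval : #(pathCCDSet n) = #{i ∈ range n | i % 3 = 1 ∨ (i % 3 = 0 ∧ i + 1 = n)} := by
    rw [pathCCDSet, card_filter, card_filter]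
    exact Fin.sum_univ_eq_sum_range
      (fun i => if i % 3 = 1 ∨ (i % 3 = 0 ∧ i + 1 = n) then 1 else 0) n
  rw [hval]
  cases n with
  | zero => rfl
  | succ m =>
    rw [range_add_one, filter_insert,
      filter_congr (q := (· % 3 = 1)) fun i hi => by rw [mem_range] at hi; omega]
    split_ifs
    · rw [card_insert_of_notMem (by simp), card_filter_range_mod_three_eq_one]
      omega
    · rw [card_filter_range_mod_three_eq_one]
      omega

lemma nbrsIn_pathCCDSet_eq_one {n : ℕ} {u v : Fin n} (huv : (pathG n).Adj u v)
    (hu : u ∉ pathCCDSet n) (hv : v ∉ pathCCDSet n) :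
    nbrsIn (pathG n) (pathCCDSet n) u = 1 := by
  simp only [mem_pathCCDSet, pathG_adj] at huv hu hv
  obtain ⟨w, hw⟩ : ∃ w : Fin n,
      (u.val % 3 = 2 ∧ w.val + 1 = u.val) ∨ (u.val % 3 = 0 ∧ u.val + 1 = w.val) := by
    by_cases h : u.val % 3 = 2
    · exact ⟨⟨u - 1, by omega⟩, .inl ⟨h, by dsimp only; omega⟩⟩
    · exact ⟨⟨u + 1, by omega⟩, .inr ⟨by omega, rfl⟩⟩
  rw [nbrsIn, card_eq_one]
  refine ⟨w, ?_⟩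
  ext x
  simp only [mem_filter, mem_pathCCDSet, mem_singleton, pathG_adj, Fin.ext_iff]
  omega

lemma pathCCDSet_ccd (n : ℕ) : CCD (pathG n) (pathCCDSet n) := by
  refine ⟨fun x y hxy hx hy => ?_, fun u v huv hu hv => ?_⟩
  · simp only [mem_pathCCDSet, pathG_adj] at hxy hx hy
    omega
  · rw [nbrsIn_pathCCDSet_eq_one huv hu hv, nbrsIn_pathCCDSet_eq_one huv.symm hv hu]

/-- The minimum size of a nonempty CCD subset of `P_n` is `⌈n/3⌉`. -/
theorem PQ2_path (n : ℕ) (hn : 1 ≤ n) :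
    IsLeast {k : ℕ | ∃ H : Finset (Fin n), H.Nonempty ∧ CCD (pathG n) H ∧ H.card = k}
      ((n + 2) / 3) := by
  refine ⟨⟨pathCCDSet n, ?_, pathCCDSet_ccd n, card_pathCCDSet n⟩, ?_⟩
  · rw [← card_pos, card_pathCCDSet]
    omega
  · rintro _ ⟨H, hne, hH, rfl⟩
    have hdom : ∀ v ∉ H, ∃ u ∈ H, (pathG n).Adj v u := fun v hv =>
      hH.exists_adj_mem (pathG_preconnected n) hne hv
    have := card_le_mul_card_of_dominating pathG_degree_le_two hdom
    rw [Fintype.card_fin] at this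
    omega
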